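/- Optimality of the reduction from OEP to PSP (Theorem 2): if A* is a prerequisite-closed subset of projects of the PSP instance φ(G) that maximizes total profit among all prerequisite-closed subsets, then the induced state assignment s_{A*} satisfies the execution state constraint and minimizes the run time T(s) over all state assignments s satisfying the execution state constraint. -/
import Mathlib


/-- Operator states: compute, load, prune. -/
inductive NodeState where
  | compute
  | load
  | prune
deriving DecidableEq

/-- `prereq parents p q` : project `p` is a prerequisite of project `q` in the
PSP instance `φ(G)` (projects `aᵢ = Sum.inl i`, `bᵢ = Sum.inr i`):
`aᵢ` is a prerequisite of `bᵢ` for each node `i`, and `aᵢ` is a prerequisite of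
`bⱼ` for each edge `(i, j)` (i.e. whenever `i` is a parent of `j`). -/
def prereq {N : Type} [Fintype N] [DecidableEq N] (parents : N → Finset N) :
    N ⊕ N → N ⊕ N → Prop := fun p q =>
  match p, q with
  | Sum.inl i, Sum.inr j => i = j ∨ i ∈ parents j
  | _, _ => False

/-- A prerequisite-closed (i.e. feasible) set of projects. -/
def PrereqClosed {N : Type} [Fintype N] [DecidableEq N] (parents : N → Finset N)
    (A : Finset (N ⊕ N)) : Prop :=
  ∀ p q : N ⊕ N, prereq parents p q → q ∈ A → p ∈ A

/-- The state assignment induced by a project selection `A`. -/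
def inducedState {N : Type} [Fintype N] [DecidableEq N] (A : Finset (N ⊕ N))
    (i : N) : NodeState :=
  if Sum.inl i ∈ A then (if Sum.inr i ∈ A then .compute else .load) else .prune

/-- The execution state constraint: every computed node has no pruned parent. -/
def ExecOK {N : Type} [Fintype N] [DecidableEq N] (parents : N → Finset N)
    (s : N → NodeState) : Prop :=
  ∀ i, s i = NodeState.compute → ∀ j ∈ parents i, s j ≠ NodeState.prune

/-- Profits of the PSP instance `φ(G)`: `p(aᵢ) = -lᵢ` and `p(bᵢ) = lᵢ - cᵢ`. -/
def profit {N : Type} [Fintype N] [DecidableEq N] (l c : N → ℝ) :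
    N ⊕ N → ℝ := fun x =>
  match x with
  | Sum.inl i => -l i
  | Sum.inr i => l i - c i

/-- The workflow run time of a state assignment:
`T(s) = Σᵢ 1[s(nᵢ)=S_c]·cᵢ + 1[s(nᵢ)=S_l]·lᵢ`. -/
def runTime {N : Type} [Fintype N] [DecidableEq N] (l c : N → ℝ)
    (s : N → NodeState) : ℝ :=
  ∑ i, ((if s i = NodeState.compute then c i else 0) +
        (if s i = NodeState.load then l i else 0))

lemma profit_eq_neg_runTime {N : Type} [Fintype N] [DecidableEq N]
    (l c : N → ℝ) (A : Finset (N ⊕ N))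
    (hcl : ∀ i, Sum.inr i ∈ A → Sum.inl i ∈ A) :
    (∑ x ∈ A, profit l c x) = - runTime l c (inducedState A) := by
  have h1 : (∑ x ∈ A, profit l c x)
      = ∑ x : N ⊕ N, if x ∈ A then profit l c x else 0 := by
    rw [Finset.sum_ite_mem, Finset.univ_inter]
  rw [h1, Fintype.sum_sum_type, runTime, ← Finset.sum_neg_distrib,
    ← Finset.sum_add_distrib]
  refine Finset.sum_congr rfl fun i _ => ?_
  by_cases h2 : Sum.inr i ∈ A
  · have h3 := hcl i h2
    simp [inducedState, profit, h2, h3]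
    ring
  · by_cases h3 : Sum.inl i ∈ A <;> simp [inducedState, profit, h2, h3]

/-- Optimality of the reduction from OEP to PSP, Theorem 2: if
`A*` is a prerequisite-closed subset of projects of `φ(G)` maximizing total
profit among all prerequisite-closed subsets, then the induced state
assignment `s_{A*}` satisfies the execution state constraint and minimizes the
run time `T(s)` over all state assignments `s` satisfying the execution state
constraint. -/
theorem oep_psp_optimal {N : Type} [Fintype N] [DecidableEq N]
    (parents : N → Finset N)
    (acyclic : WellFounded fun i j => i ∈ parents j)
    (l c : N → ℝ)
    (Astar : Finset (N ⊕ N)) (hA : PrereqClosed parents Astar)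
    (hmax : ∀ B : Finset (N ⊕ N), PrereqClosed parents B →
      (∑ x ∈ B, profit l c x) ≤ ∑ x ∈ Astar, profit l c x) :
    ExecOK parents (inducedState Astar) ∧
    ∀ s : N → NodeState, ExecOK parents s →
      runTime l c (inducedState Astar) ≤ runTime l c s := by
  have hcl : ∀ i, Sum.inr i ∈ Astar → Sum.inl i ∈ Astar := fun i h =>
    hA _ _ (show prereq parents (Sum.inl i) (Sum.inr i) from Or.inl rfl) h
  constructor
  · intro i hi j hj
    have hb : Sum.inr i ∈ Astar := by
      by_contra hb
      simp [inducedState, hb] at hi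
      split at hi <;> simp_all
    have ha : Sum.inl j ∈ Astar := hA _ _ (show prereq parents (Sum.inl j) (Sum.inr i) from Or.inr hj) hb
    simp only [inducedState, if_pos ha]
    split <;> simp
  · intro s hs
    set B : Finset (N ⊕ N) :=
      (Finset.univ.filter (fun i => s i ≠ .prune)).image Sum.inl ∪
      (Finset.univ.filter (fun i => s i = .compute)).image Sum.inr with hB
    have hmemL : ∀ i, Sum.inl i ∈ B ↔ s i ≠ .prune := by
      intro i; simp [hB]
    have hmemR : ∀ i, Sum.inr i ∈ B ↔ s i = .compute := by
      intro i; simp [hB]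
    have hBcl : PrereqClosed parents B := by
      intro p q hpq hq
      match p, q with
      | Sum.inl i, Sum.inr j =>
        have hj : s j = .compute := (hmemR j).mp hq
        rw [hmemL]
        rcases hpq with rfl | hpar
        · simp [hj]
        · exact hs j hj i hpar
      | Sum.inl _, Sum.inl _ => exact absurd hpq (by simp [prereq])
      | Sum.inr _, _ => exact absurd hpq (by simp [prereq])
    have hind : inducedState B = s := by
      funext i
      rcases h : s i with _ | _ | _ <;>
        simp [inducedState, hmemL i, hmemR i, h]
    have hBcl2 : ∀ i, Sum.inr i ∈ B → Sum.inl i ∈ B := fun i h =>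
      hBcl _ _ (show prereq parents (Sum.inl i) (Sum.inr i) from Or.inl rfl) h
    have h1 := profit_eq_neg_runTime l c Astar hcl
    have h2 := profit_eq_neg_runTime l c B hBcl2
    have h3 := hmax B hBcl
    rw [h1, h2, hind] at h3
    linarith
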